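/- arXiv:math/0409345 — 4 statements merged into one kernel-verified Lean document; each statement's English description precedes it below -/
import Mathlib

section
/- Let E be a number field with E ≠ ℚ which is not a CM field, and let Δ be a subgroup of finite index in the unit group 𝓞_E^×. Then the subfield of E generated by the images in E of the elements of Δ is equal to E itself. -/
/-!
Let `K` be the field generated by `Δ`. Since `Δ` has finite index, `u ↦ u ^ [𝓞_E^× : Δ]` maps
`𝓞_E^×` into `𝓞_K^×` with torsion kernel, so Dirichlet's unit theorem gives
`r₁(E) + r₂(E) ≤ r₁(K) + r₂(K)`. If `K ≠ E` then `[E : K] ≥ 2`, and comparing with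
`r₁(E) + 2 r₂(E) = [E : K] (r₁(K) + 2 r₂(K))` forces `r₁(E) = 0`, `r₂(K) = 0` and `[E : K] = 2`:
`E` is a CM field with totally real subfield `K`.
-/

open NumberField

/-- A field is totally real if every embedding into `ℂ` has image contained in `ℝ`. -/
def IsTotallyRealField (F : Type*) [Field F] : Prop :=
  ∀ (φ : F →+* ℂ) (x : F), (φ x).im = 0

/-- A field is totally imaginary if no embedding into `ℂ` has image contained in `ℝ`. -/
def IsTotallyImaginaryField (E : Type*) [Field E] : Prop :=
  ∀ φ : E →+* ℂ, ∃ x : E, (φ x).im ≠ 0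

/-- A number field is a CM field if it is a totally imaginary quadratic extension
of a totally real subfield. -/
def IsCMField (E : Type*) [Field E] : Prop :=
  ∃ F : Subfield E, IsTotallyRealField F ∧ IsTotallyImaginaryField E ∧
    Module.finrank F E = 2

open Module NumberField.InfinitePlace NumberField.Units

theorem NumberField.IsTotallyReal.isTotallyRealField {F : Type*} [Field F] [IsTotallyReal F] :
    IsTotallyRealField F := fun φ x =>
  Complex.conj_eq_iff_im.mp (RingHom.congr_fun (IsTotallyReal.complexEmbedding_isReal φ) x)

theorem NumberField.IsTotallyComplex.isTotallyImaginaryField {E : Type*} [Field E]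
    [IsTotallyComplex E] : IsTotallyImaginaryField E := by
  intro φ
  by_contra! h
  exact IsTotallyComplex.complexEmbedding_not_isReal φ
    (RingHom.ext fun x => Complex.conj_eq_iff_im.mpr (h x))

theorem Module.finrank_le_finrank_of_ker_le_torsion {R M N : Type*} [CommRing R]
    [StrongRankCondition R] [AddCommGroup M] [Module R M] [AddCommGroup N] [Module R N]
    [Module.Finite R N] (f : M →ₗ[R] N) (hf : LinearMap.ker f ≤ Submodule.torsion R M) :
    finrank R M ≤ finrank R N := by
  rw [← finrank_quotient_eq_of_le_torsion hf, f.quotKerEquivRange.finrank_eq]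
  exact Submodule.finrank_le _

namespace NumberField.Units

variable {E : Type*} [Field E] [NumberField E]

theorem rank_le_rank_of_ker_le_torsion {F : Type*} [Field F] [NumberField F]
    (ψ : (𝓞 E)ˣ →* (𝓞 F)ˣ) (hψ : ψ.ker ≤ torsion E) : rank E ≤ rank F := by
  rw [← finrank_eq, ← finrank_eq]
  refine finrank_le_finrank_of_ker_le_torsion ψ.toAdditive.toIntLinearMap fun u hu => ?_
  have : Additive.toMul u ∈ torsion E := hψ hu
  change u ∈ (Submodule.torsion ℤ _).toAddSubgroup
  rw [Submodule.torsion_int]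
  exact (AddCommGroup.mem_torsion _).mpr this

def codRestrict (K : IntermediateField ℚ E) (Δ : Subgroup (𝓞 E)ˣ)
    (hΔ : ∀ u ∈ Δ, ((u : 𝓞 E) : E) ∈ K) : Δ →* (𝓞 K)ˣ :=
  MonoidHom.toHomUnits <| RingOfIntegers.restrict_monoidHom
    ((((algebraMap (𝓞 E) E : 𝓞 E →* E).comp (Units.coeHom (𝓞 E))).comp Δ.subtype).codRestrict
      K fun u => hΔ u u.2)
    fun u => (isIntegral_algHom_iff K.val.toRingHom.toIntAlgHom Subtype.val_injective).mp
      ((u : (𝓞 E)ˣ) : 𝓞 E).isIntegral_coe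

theorem coe_codRestrict (K : IntermediateField ℚ E) (Δ : Subgroup (𝓞 E)ˣ)
    (hΔ : ∀ u ∈ Δ, ((u : 𝓞 E) : E) ∈ K) (u : Δ) :
    (((codRestrict K Δ hΔ u : 𝓞 K) : K) : E) = (((u : (𝓞 E)ˣ) : 𝓞 E) : E) := rfl

theorem codRestrict_injective (K : IntermediateField ℚ E) (Δ : Subgroup (𝓞 E)ˣ)
    (hΔ : ∀ u ∈ Δ, ((u : 𝓞 E) : E) ∈ K) : Function.Injective (codRestrict K Δ hΔ) := by
  intro u v h
  have := congrArg (fun w : (𝓞 K)ˣ => (((w : 𝓞 K) : K) : E)) h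
  simp only [coe_codRestrict] at this
  exact Subtype.ext (Units.ext (RingOfIntegers.coe_injective this))

theorem rank_le_rank_of_forall_mem (K : IntermediateField ℚ E) (Δ : Subgroup (𝓞 E)ˣ)
    [Δ.FiniteIndex] (hΔ : ∀ u ∈ Δ, ((u : 𝓞 E) : E) ∈ K) : rank E ≤ rank K := by
  let pow : (𝓞 E)ˣ →* Δ := (powMonoidHom Δ.index).codRestrict Δ Δ.pow_index_mem
  refine rank_le_rank_of_ker_le_torsion ((codRestrict K Δ hΔ).comp pow) fun u hu => ?_
  have hpow : pow u = 1 := (map_eq_one_iff _ (codRestrict_injective K Δ hΔ)).mp hu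
  exact (CommGroup.mem_torsion _).mpr (isOfFinOrder_iff_pow_eq_one.mpr
    ⟨_, Nat.pos_of_ne_zero Subgroup.FiniteIndex.index_ne_zero, congrArg Subtype.val hpow⟩)

end NumberField.Units

theorem NumberField.isTotallyComplex_and_isTotallyReal_of_rank_le {K L : Type*} [Field K]
    [NumberField K] [Field L] [NumberField L] [Algebra K L] (hrank : rank L ≤ rank K)
    (hKL : finrank K L ≠ 1) : IsTotallyComplex L ∧ IsTotallyReal K ∧ finrank K L = 2 := by
  have hplaces : nrRealPlaces L + nrComplexPlaces L ≤ nrRealPlaces K + nrComplexPlaces K := by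
    have hL := Fintype.card_pos (α := InfinitePlace L)
    have hK := Fintype.card_pos (α := InfinitePlace K)
    rw [rank, rank] at hrank
    simp only [card_eq_nrRealPlaces_add_nrComplexPlaces] at hrank hL hK
    omega
  have hdegK := card_add_two_mul_card_eq_rank K
  have hdegL := card_add_two_mul_card_eq_rank L
  have hmul : finrank ℚ K * finrank K L = finrank ℚ L := finrank_mul_finrank ℚ K L
  have h2 : 2 * finrank ℚ K ≤ finrank ℚ L := by
    have : 0 < finrank K L := finrank_pos
    rw [← hmul, mul_comm]
    exact Nat.mul_le_mul_left _ (by omega)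
  refine ⟨nrRealPlaces_eq_zero_iff.mp (by omega), nrComplexPlaces_eq_zero_iff.mp (by omega), ?_⟩
  refine Nat.eq_of_mul_eq_mul_left (finrank_pos (R := ℚ) (M := K)) ?_
  omega

theorem isCMField_of_rank_le {E : Type*} [Field E] [NumberField E] (K : IntermediateField ℚ E)
    (hrank : rank E ≤ rank K) (hK : K ≠ ⊤) : _root_.IsCMField E := by
  obtain ⟨hE, hKreal, h2⟩ := isTotallyComplex_and_isTotallyReal_of_rank_le hrank
    (IntermediateField.finrank_eq_one_iff_eq_top.not.mpr hK)
  exact ⟨K.toSubfield, hKreal.isTotallyRealField, hE.isTotallyImaginaryField, h2⟩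

theorem units_generate_field_general (E : Type*) [Field E] [NumberField E]
    (hCM : ¬ _root_.IsCMField E)
    (Δ : Subgroup (𝓞 E)ˣ) (hΔ : Δ.FiniteIndex) :
    Subfield.closure ((fun u : (𝓞 E)ˣ => algebraMap (𝓞 E) E (u : 𝓞 E)) ''
      (Δ : Set (𝓞 E)ˣ)) = ⊤ := by
  set L := Subfield.closure ((fun u : (𝓞 E)ˣ => algebraMap (𝓞 E) E (u : 𝓞 E)) ''
    (Δ : Set (𝓞 E)ˣ))
  let K : IntermediateField ℚ E := L.toIntermediateField fun x => by
    simp [SubfieldClass.ratCast_mem L x]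
  have hΔK : ∀ u ∈ Δ, ((u : 𝓞 E) : E) ∈ K := fun u hu => Subfield.subset_closure ⟨u, hu, rfl⟩
  by_contra hL
  refine hCM (isCMField_of_rank_le K (rank_le_rank_of_forall_mem K Δ hΔK) fun hK => hL ?_)
  exact (congrArg IntermediateField.toSubfield hK).trans IntermediateField.top_toSubfield

/-- If `E` is a number field, `E ≠ ℚ`, `E` is not CM, and `Δ` is a finite index subgroup
of the units of `𝓞 E`, then the subfield of `E` generated by (the images in `E` of)
the elements of `Δ` is all of `E`. -/
theorem units_generate_field (E : Type*) [Field E] [NumberField E]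
    (hE : 1 < Module.finrank ℚ E) (hCM : ¬ _root_.IsCMField E)
    (Δ : Subgroup (𝓞 E)ˣ) (hΔ : Δ.FiniteIndex) :
    Subfield.closure ((fun u : (𝓞 E)ˣ => algebraMap (𝓞 E) E (u : 𝓞 E)) ''
      (Δ : Set (𝓞 E)ˣ)) = ⊤ :=
  units_generate_field_general E hCM Δ hΔ
end

section
/- Let E be a number field and F a subfield of E such that the subgroup of 𝓞_E^× consisting of those units which lie in F has finite index in 𝓞_E^×. Then either F = E, or F is totally real and E is a totally imaginary quadratic extension of F (i.e., E has degree 2 over F, every field embedding of F into ℂ has image contained in ℝ, and no field embedding of E into ℂ has image contained in ℝ). -/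
open NumberField

/-- The subgroup of units of `𝓞 E` whose image in `E` lies in the subfield `F`. -/
def unitsIn (E : Type*) [Field E] [NumberField E] (F : Subfield E) : Subgroup (𝓞 E)ˣ where
  carrier := {u : (𝓞 E)ˣ | algebraMap (𝓞 E) E (u : 𝓞 E) ∈ F}
  one_mem' := by simpa using F.one_mem
  mul_mem' := by
    intro a b ha hb
    simpa [map_mul] using F.mul_mem ha hb
  inv_mem' := by
    intro a ha
    simp only [Set.mem_setOf_eq] at *
    have hmul : algebraMap (𝓞 E) E ((a : (𝓞 E)ˣ) : 𝓞 E) *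
        algebraMap (𝓞 E) E ((a⁻¹ : (𝓞 E)ˣ) : 𝓞 E) = 1 := by
      rw [← map_mul, Units.mul_inv, map_one]
    have h2 : algebraMap (𝓞 E) E ((a⁻¹ : (𝓞 E)ˣ) : 𝓞 E) =
        (algebraMap (𝓞 E) E ((a : (𝓞 E)ˣ) : 𝓞 E))⁻¹ :=
      eq_inv_of_mul_eq_one_right hmul
    rw [h2]
    exact F.inv_mem ha

/-!
A subgroup of finite index in `(𝓞 E)ˣ` has the same `ℤ`-rank, and it is the image of `(𝓞 F)ˣ`,
so by Dirichlet's unit theorem `F` and `E` have the same number of infinite places: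
`r₁(F) + r₂(F) = r₁(E) + r₂(E)`. Since `r₁(E) + 2 r₂(E) = [E : F] (r₁(F) + 2 r₂(F))`, we get
`[E : F] [F : ℚ] ≤ 2 (r₁(E) + r₂(E)) = 2 (r₁(F) + r₂(F)) ≤ 2 [F : ℚ]`, so `[E : F] ≤ 2`, and in
degree `2` both inequalities are equalities: `r₁(E) = 0` and `r₂(F) = 0`.
-/

open Module

theorem AddSubgroup.finrank_eq_of_finiteIndex' {M : Type*} [AddCommGroup M] [Module.Finite ℤ M]
    (A : AddSubgroup M) [A.FiniteIndex] : finrank ℤ A = finrank ℤ M := by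
  have : Finite (M ⧸ A.toIntSubmodule) := A.finite_quotient_of_finiteIndex
  have hquot : finrank ℤ (M ⧸ A.toIntSubmodule) = 0 :=
    finrank_eq_zero_iff_isTorsion.mpr (isAddTorsion_iff_isTorsion_int.mp isAddTorsion_of_finite)
  rw [← A.toIntSubmodule.finrank_quotient_add_finrank, hquot, zero_add]
  rfl

theorem Subgroup.finrank_additive_eq_of_finiteIndex {G : Type*} [CommGroup G]
    [Module.Finite ℤ (Additive G)] (H : Subgroup G) [H.FiniteIndex] :
    finrank ℤ (Additive H) = finrank ℤ (Additive G) :=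
  have : H.toAddSubgroup.FiniteIndex := ⟨H.index_toAddSubgroup ▸ FiniteIndex.index_ne_zero⟩
  H.toAddSubgroup.finrank_eq_of_finiteIndex'

theorem Subfield.eq_top_of_finrank_eq_one {E : Type*} [Field E] {F : Subfield E}
    (h : finrank F E = 1) : F = ⊤ :=
  top_le_iff.mp <| relfinrank_eq_one_iff.mp <| by rwa [relfinrank_top_right]

namespace NumberField

theorem IsTotallyReal.isTotallyRealField_s1 {K : Type*} [Field K] [IsTotallyReal K] :
    IsTotallyRealField K := fun φ x =>
  Complex.conj_eq_iff_im.mp <| RingHom.congr_fun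
    (ComplexEmbedding.isReal_iff.mp (IsTotallyReal.complexEmbedding_isReal φ)) x

theorem IsTotallyComplex.isTotallyImaginaryField_s1 {K : Type*} [Field K] [IsTotallyComplex K] :
    IsTotallyImaginaryField K := by
  intro φ
  by_contra! hreal
  exact IsTotallyComplex.complexEmbedding_not_isReal φ <| ComplexEmbedding.isReal_iff.mpr <|
    RingHom.ext fun x => Complex.conj_eq_iff_im.mpr (hreal x)

theorem RingOfIntegers.exists_algebraMap_eq_of_mem {E : Type*} [Field E] {F : Subfield E}
    (y : 𝓞 E) (hy : (y : E) ∈ F) : ∃ x : 𝓞 F, algebraMap (𝓞 F) (𝓞 E) x = y := by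
  have hint : IsIntegral ℤ (⟨y, hy⟩ : F) :=
    (isIntegral_algebraMap_iff (algebraMap F E).injective).mp y.isIntegral_coe
  exact ⟨⟨_, hint⟩, rfl⟩

theorem Units.unitsIn_le_range_map {E : Type*} [Field E] [NumberField E] (F : Subfield E) :
    unitsIn E F ≤ (Units.map (algebraMap (𝓞 F) (𝓞 E)).toMonoidHom).range := by
  intro u hu
  obtain ⟨x, hx⟩ := RingOfIntegers.exists_algebraMap_eq_of_mem (u : 𝓞 E) hu
  obtain ⟨y, hy⟩ := RingOfIntegers.exists_algebraMap_eq_of_mem _ ((unitsIn E F).inv_mem hu)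
  have hxy : x * y = 1 := FaithfulSMul.algebraMap_injective (𝓞 F) (𝓞 E) <| by simp [hx, hy]
  exact ⟨Units.mkOfMulEqOne x y hxy, Units.ext hx⟩

variable {K L : Type*} [Field K] [NumberField K] [Field L] [NumberField L] [Algebra K L]

theorem Units.rank_eq_of_finiteIndex_range_map
    (h : (Units.map (algebraMap (𝓞 K) (𝓞 L)).toMonoidHom).range.FiniteIndex) :
    Units.rank K = Units.rank L := by
  set ι := Units.map (algebraMap (𝓞 K) (𝓞 L)).toMonoidHom
  have hι : Function.Injective ι :=
    Units.map_injective (FaithfulSMul.algebraMap_injective (𝓞 K) (𝓞 L))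
  rw [← Units.finrank_eq, ← Units.finrank_eq, ← ι.range.finrank_additive_eq_of_finiteIndex]
  exact (MonoidHom.ofInjective hι).toAdditive.toIntLinearEquiv.finrank_eq

open InfinitePlace in
theorem finrank_eq_one_or_of_units_rank_eq (h : Units.rank K = Units.rank L) :
    finrank K L = 1 ∨ finrank K L = 2 ∧ IsTotallyReal K ∧ IsTotallyComplex L := by
  have hcard : nrRealPlaces K + nrComplexPlaces K = nrRealPlaces L + nrComplexPlaces L := by
    have := Fintype.card_pos (α := InfinitePlace K)
    have := Fintype.card_pos (α := InfinitePlace L)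
    rw [← card_eq_nrRealPlaces_add_nrComplexPlaces, ← card_eq_nrRealPlaces_add_nrComplexPlaces]
    unfold Units.rank at h
    omega
  have hK := card_add_two_mul_card_eq_rank K
  have hL := card_add_two_mul_card_eq_rank L
  have htower := finrank_mul_finrank ℚ K L
  have hn : 0 < finrank K L := finrank_pos
  have hd : 0 < finrank ℚ K := finrank_pos
  have hn2 : finrank K L ≤ 2 := by
    refine Nat.le_of_mul_le_mul_left ?_ hd
    calc finrank ℚ K * finrank K L = nrRealPlaces L + 2 * nrComplexPlaces L := by rw [htower, hL]
      _ ≤ 2 * (nrRealPlaces L + nrComplexPlaces L) := by omega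
      _ = 2 * (nrRealPlaces K + nrComplexPlaces K) := by rw [hcard]
      _ ≤ finrank ℚ K * 2 := by omega
  rw [← nrComplexPlaces_eq_zero_iff, ← nrRealPlaces_eq_zero_iff]
  interval_cases finrank K L <;> omega

end NumberField

/-- If the units of `𝓞 E` lying in a subfield `F` form a finite-index subgroup of all units,
then either `F = E`, or `F` is totally real and `E` is a totally imaginary quadratic
extension of `F`. -/
theorem subfield_of_finiteIndex_units (E : Type*) [Field E] [NumberField E]
    (F : Subfield E) (h : (unitsIn E F).FiniteIndex) :
    F = ⊤ ∨ (IsTotallyRealField F ∧ Module.finrank F E = 2 ∧ IsTotallyImaginaryField E) := by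
  have hrange := Subgroup.finiteIndex_of_le (NumberField.Units.unitsIn_le_range_map F)
  rcases NumberField.finrank_eq_one_or_of_units_rank_eq
      (NumberField.Units.rank_eq_of_finiteIndex_range_map hrange) with
    h1 | ⟨h2, hF, hE⟩
  · exact .inl (Subfield.eq_top_of_finrank_eq_one h1)
  · exact .inr ⟨hF.isTotallyRealField_s1, h2, hE.isTotallyImaginaryField_s1⟩
end

section
/- Let F be a totally real number field with F ≠ ℚ and let E be a totally imaginary quadratic extension of F. Then there exists a unit θ of 𝓞_F (which is in particular a unit of 𝓞_E lying in F) such that for every integer r ≥ 1 the subring ℤ[θ^r] generated by θ^r has finite index in the additive group of 𝓞_F. -/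
/-!
By Dirichlet's unit theorem there is a unit `u` of `𝓞 F` with `w u < 1` at every infinite place
`w` other than a chosen place `w₁`, and then so does every power `u ^ r`. Since `w₁` is real, an
embedding of `F` agreeing with `w₁.embedding` on `ℚ(u ^ r)` but different from it would induce
another place at which `u ^ r` has the same size as at `w₁`; then `w (u ^ r) < 1` at every place,
contradicting `|N(u ^ r)| = 1`. So `u ^ r` is a primitive element of `F / ℚ`, and then `ℤ[u ^ r]`
has finite index in `𝓞 F` because every element of `𝓞 F` has a nonzero integer multiple in it.
-/

open NumberField

open Polynomial

theorem AddSubgroup.finiteIndex_of_forall_exists_zsmul_mem {M : Type*} [AddCommGroup M]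
    [Module.Finite ℤ M] (H : AddSubgroup M) (hH : ∀ y, ∃ b ∈ nonZeroDivisors ℤ, b • y ∈ H) :
    H.FiniteIndex := by
  have : Finite (M ⧸ H.toIntSubmodule) := by
    refine Module.finite_of_fg_torsion _ fun y => ?_
    obtain ⟨y, rfl⟩ := Submodule.Quotient.mk_surjective _ y
    obtain ⟨b, hb, hby⟩ := hH y
    exact ⟨⟨b, hb⟩, (Submodule.Quotient.mk_smul _ _ _).symm.trans
      ((Submodule.Quotient.mk_eq_zero _).2 hby)⟩
  exact @AddSubgroup.finiteIndex_of_finite_quotient _ _ _ this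

namespace NumberField

theorem RingOfIntegers.exists_zsmul_mem_adjoin_int_of_adjoin_rat_eq_top {K : Type*} [Field K]
    [CharZero K] {x : 𝓞 K} (hx : Algebra.adjoin ℚ {(x : K)} = ⊤) (y : 𝓞 K) :
    ∃ b ∈ nonZeroDivisors ℤ, b • y ∈ Algebra.adjoin ℤ {x} := by
  obtain ⟨p, hp⟩ : ∃ p : ℚ[X], aeval (x : K) p = y := by
    rw [← AlgHom.mem_range, ← Algebra.adjoin_singleton_eq_range_aeval, hx]
    trivial
  obtain ⟨b, hb, hpb⟩ := IsLocalization.integerNormalization_spec (nonZeroDivisors ℤ) p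
  set q := IsLocalization.integerNormalization (nonZeroDivisors ℤ) p
  refine ⟨b, hb, ?_⟩
  rw [Algebra.adjoin_singleton_eq_range_aeval]
  refine ⟨q, RingOfIntegers.coe_injective ?_⟩
  calc ((aeval x q : 𝓞 K) : K) = aeval (x : K) (q.map (algebraMap ℤ ℚ)) := by
        rw [aeval_map_algebraMap, RingOfIntegers.coe_eq_algebraMap, aeval_algebraMap_apply]
    _ = algebraMap (𝓞 K) K (b • y) := by rw [hpb, map_zsmul, hp, map_zsmul]

theorem RingOfIntegers.finiteIndex_closure_of_adjoin_rat_eq_top {K : Type*} [Field K]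
    [NumberField K] {x : 𝓞 K} (hx : Algebra.adjoin ℚ {(x : K)} = ⊤) :
    (Subring.closure {x}).toAddSubgroup.FiniteIndex := by
  refine AddSubgroup.finiteIndex_of_forall_exists_zsmul_mem _ fun y => ?_
  obtain ⟨b, hb, hby⟩ := exists_zsmul_mem_adjoin_int_of_adjoin_rat_eq_top hx y
  rw [Algebra.adjoin_int] at hby
  exact ⟨b, hb, hby⟩

theorem InfinitePlace.isReal_of_isTotallyRealField {K : Type*} [Field K]
    (hK : IsTotallyRealField K) (w : InfinitePlace K) : w.IsReal :=
  ⟨w.embedding, ComplexEmbedding.isReal_iff.2 <| RingHom.ext fun x =>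
    Complex.conj_eq_iff_im.2 (hK _ x), w.mk_embedding⟩

theorem Units.exists_infinitePlace_lt_one_of_ne {K : Type*} [Field K] [NumberField K]
    (w₁ : InfinitePlace K) : ∃ u : (𝓞 K)ˣ, ∀ w, w ≠ w₁ → w (u : K) < 1 := by
  obtain ⟨u, hu⟩ := Units.dirichletUnitTheorem.exists_unit K w₁
  exact ⟨u, fun w hw => (Real.log_neg_iff (InfinitePlace.pos_iff.2 (by simp))).1 (hu w hw)⟩

end NumberField

theorem exists_unit_power_generates_finite_index_subring_CM_general
    (F : Type*) [Field F] [NumberField F]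
    (hF : IsTotallyRealField F) :
    ∃ θ : (𝓞 F)ˣ, ∀ r : ℕ, 1 ≤ r →
      (Subring.closure {((θ : 𝓞 F) ^ r)}).toAddSubgroup.FiniteIndex := by
  obtain ⟨w₁⟩ : Nonempty (InfinitePlace F) := inferInstance
  obtain ⟨u, hu⟩ := Units.exists_infinitePlace_lt_one_of_ne w₁
  refine ⟨u, fun r hr => RingOfIntegers.finiteIndex_closure_of_adjoin_rat_eq_top ?_⟩
  refine adjoin_eq_top_of_infinitePlace_lt (pow_ne_zero _ u.ne_zero) (fun w hw => ?_)
    (.inl (InfinitePlace.isReal_of_isTotallyRealField hF w₁))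
  simpa using pow_lt_one₀ (by positivity) (hu w hw) (by omega)

/-- If `F ≠ ℚ` is a totally real number field and `E` is a totally imaginary quadratic
extension of `F`, there is a unit `θ` of `𝓞 F` such that for every `r ≥ 1` the subring
`ℤ[θ^r]` has finite index in the additive group of `𝓞 F`. -/
theorem exists_unit_power_generates_finite_index_subring_CM
    (F E : Type*) [Field F] [NumberField F] [Field E] [NumberField E] [Algebra F E]
    (hF : IsTotallyRealField F) (hFQ : 1 < Module.finrank ℚ F)
    (hquad : Module.finrank F E = 2) (hE : IsTotallyImaginaryField E) :
    ∃ θ : (𝓞 F)ˣ, ∀ r : ℕ, 1 ≤ r →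
      (Subring.closure {((θ : 𝓞 F) ^ r)}).toAddSubgroup.FiniteIndex :=
  exists_unit_power_generates_finite_index_subring_CM_general F hF
end

section
/- Let K be a number field with K ≠ ℚ which is not a CM field, and let θ ∈ 𝓞_K^× be a unit such that for every integer s ≥ 1 the subring ℤ[θ^s] has finite index in the additive group of 𝓞_K. Then for every integer r ≥ 1 there exists an integer N ≥ 1 such that the subgroup of SL(2, 𝓞_K) generated by the two matrices [[θ^r,0],[0,θ^{−r}]] and [[1,r],[0,1]] contains the matrix [[1,x],[0,1]] for every x ∈ N·𝓞_K. -/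
/-! The matrices `upperU K x` lying in a subgroup `G` form an additive subgroup `T` of `𝓞 K`,
and if `diagPow K θ r ∈ G`, conjugation by it shows `θ^(2r) • T ⊆ T`. Hence `r ∈ T` gives
`r · ℤ[θ^(2r)] ⊆ T`, and a subring of finite index `m` contains `m · 𝓞 K`. -/

open NumberField Matrix

variable (K : Type*) [Field K] [NumberField K]

/-- The diagonal matrix `[[θ^r,0],[0,θ^{-r}]]` in `SL(2, 𝓞 K)`. -/
def diagPow (θ : (𝓞 K)ˣ) (r : ℕ) : SpecialLinearGroup (Fin 2) (𝓞 K) :=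
  ⟨!![((θ ^ r : (𝓞 K)ˣ) : 𝓞 K), 0; 0, (((θ ^ r)⁻¹ : (𝓞 K)ˣ) : 𝓞 K)],
    by first
      | simp [Matrix.det_fin_two_of, ← mul_pow]
      | (simp [Matrix.det_fin_two_of]; rw [← mul_pow, Units.mul_inv, one_pow])⟩

/-- The matrix `[[1,x],[0,1]]` in `SL(2, 𝓞 K)`. -/
def upperU (x : 𝓞 K) : SpecialLinearGroup (Fin 2) (𝓞 K) :=
  ⟨!![1, x; 0, 1], by simp [Matrix.det_fin_two_of]⟩

namespace AddSubgroup

variable {R : Type*} [Ring R]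

def leftMultipliers (A : AddSubgroup R) : Subring R where
  carrier := {z | ∀ b ∈ A, z * b ∈ A}
  one_mem' b hb := by rwa [one_mul]
  mul_mem' {z w} hz hw b hb := by rw [mul_assoc]; exact hz _ (hw b hb)
  zero_mem' b _ := by rw [zero_mul]; exact A.zero_mem
  add_mem' {z w} hz hw b hb := by rw [add_mul]; exact A.add_mem (hz b hb) (hw b hb)
  neg_mem' {z} hz b hb := by rw [neg_mul]; exact A.neg_mem (hz b hb)

theorem mul_mem_of_mem_closure_singleton {A : AddSubgroup R} {x a z : R}
    (hx : ∀ b ∈ A, x * b ∈ A) (ha : a ∈ A) (hz : z ∈ Subring.closure {x}) : z * a ∈ A := by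
  have hle : Subring.closure {x} ≤ A.leftMultipliers :=
    Subring.closure_le.mpr (Set.singleton_subset_iff.mpr hx)
  exact hle hz a ha

end AddSubgroup

theorem Subring.index_mul_mem {R : Type*} [Ring R] (S : Subring R) (y : R) :
    (S.toAddSubgroup.index : R) * y ∈ S := by
  rw [← nsmul_eq_mul]
  exact S.toAddSubgroup.nsmul_index_mem y

section Unipotent

variable {K}

omit [NumberField K]

theorem coe_upperU (x : 𝓞 K) : (upperU K x : Matrix (Fin 2) (Fin 2) (𝓞 K)) = !![1, x; 0, 1] :=
  rfl

theorem coe_diagPow (θ : (𝓞 K)ˣ) (r : ℕ) : (diagPow K θ r : Matrix (Fin 2) (Fin 2) (𝓞 K)) =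
    !![(θ : 𝓞 K) ^ r, 0; 0, ((θ⁻¹ : (𝓞 K)ˣ) : 𝓞 K) ^ r] := by
  simp [diagPow]

theorem upperU_add (a b : 𝓞 K) : upperU K (a + b) = upperU K a * upperU K b := by
  refine Matrix.SpecialLinearGroup.ext _ _ fun i j => ?_
  fin_cases i <;> fin_cases j <;> simp [coe_upperU, add_comm]

theorem upperU_zero : upperU K 0 = 1 := by
  refine Matrix.SpecialLinearGroup.ext _ _ fun i j => ?_
  fin_cases i <;> fin_cases j <;> simp [coe_upperU]

theorem upperU_neg (a : 𝓞 K) : upperU K (-a) = (upperU K a)⁻¹ :=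
  eq_inv_of_mul_eq_one_left (by rw [← upperU_add, neg_add_cancel, upperU_zero])

theorem diagPow_mul_upperU_mul_inv (θ : (𝓞 K)ˣ) (r : ℕ) (a : 𝓞 K) :
    diagPow K θ r * upperU K a * (diagPow K θ r)⁻¹ = upperU K ((θ : 𝓞 K) ^ (2 * r) * a) := by
  have hθ : (θ : 𝓞 K) ^ r * ((θ⁻¹ : (𝓞 K)ˣ) : 𝓞 K) ^ r = 1 := by
    rw [← mul_pow, Units.mul_inv, one_pow]
  rw [mul_inv_eq_iff_eq_mul]
  refine Matrix.SpecialLinearGroup.ext _ _ fun i j => ?_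
  fin_cases i <;> fin_cases j <;> simp [coe_upperU, coe_diagPow]
  linear_combination (-((θ : 𝓞 K) ^ r * a)) * hθ

def upperUEntries (G : Subgroup (SpecialLinearGroup (Fin 2) (𝓞 K))) : AddSubgroup (𝓞 K) where
  carrier := {x | upperU K x ∈ G}
  zero_mem' := by simp [upperU_zero]
  add_mem' {a b} ha hb := by simpa [upperU_add] using G.mul_mem ha hb
  neg_mem' {a} ha := by simpa [upperU_neg] using G.inv_mem ha

theorem mem_upperUEntries {G : Subgroup (SpecialLinearGroup (Fin 2) (𝓞 K))} {x : 𝓞 K} :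
    x ∈ upperUEntries G ↔ upperU K x ∈ G :=
  Iff.rfl

theorem pow_mul_mem_upperUEntries {G : Subgroup (SpecialLinearGroup (Fin 2) (𝓞 K))}
    {θ : (𝓞 K)ˣ} {r : ℕ} (hD : diagPow K θ r ∈ G) {a : 𝓞 K} (ha : a ∈ upperUEntries G) :
    (θ : 𝓞 K) ^ (2 * r) * a ∈ upperUEntries G := by
  rw [mem_upperUEntries, ← diagPow_mul_upperU_mul_inv]
  exact G.mul_mem (G.mul_mem hD ha) (G.inv_mem hD)

end Unipotent

theorem SL2_two_generators_contain_unipotents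
    (θ : (𝓞 K)ˣ)
    (hθ : ∀ s : ℕ, 1 ≤ s → (Subring.closure {((θ : 𝓞 K) ^ s)}).toAddSubgroup.FiniteIndex)
    (r : ℕ) (hr : 1 ≤ r) :
    ∃ N : ℕ, 1 ≤ N ∧ ∀ y : 𝓞 K,
      upperU K ((N : 𝓞 K) * y) ∈
        Subgroup.closure {diagPow K θ r, upperU K (r : 𝓞 K)} := by
  set G := Subgroup.closure {diagPow K θ r, upperU K (r : 𝓞 K)}
  set S := Subring.closure {(θ : 𝓞 K) ^ (2 * r)}
  have hD : diagPow K θ r ∈ G := Subgroup.subset_closure (by simp)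
  have hU : (r : 𝓞 K) ∈ upperUEntries G := Subgroup.subset_closure (by simp)
  have hm : S.toAddSubgroup.index ≠ 0 := (hθ (2 * r) (by omega)).index_ne_zero
  refine ⟨S.toAddSubgroup.index * r, Nat.one_le_iff_ne_zero.mpr (by positivity), fun y => ?_⟩
  have h := AddSubgroup.mul_mem_of_mem_closure_singleton
    (fun _ => pow_mul_mem_upperUEntries hD) hU (S.index_mul_mem y)
  rwa [mul_right_comm, ← Nat.cast_mul] at h
end
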